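/- CVaR decomposition for finite two-stage models (Proposition 2, finite form): let Ω1 and Ω2 be finite nonempty sets, p1 a probability vector on Ω1, and for each ω1 ∈ Ω1 let p2(·|ω1) be a probability vector on Ω2; let p be the joint probability vector on Ω1 × Ω2 given by p(ω1,ω2) := p1(ω1)·p2(ω2|ω1). For a probability vector q on a finite set Ω, a bounded Z : Ω → ℝ, and y ∈ (0,1], write C_y(Z; q) := sup_{ξ ∈ U(y,q)} Σ_ω ξ(ω)·q(ω)·Z(ω). Then for every Z : Ω1 × Ω2 → ℝ and y ∈ (0,1]: C_y(Z; p) = sup_{ξ1 ∈ U(y,p1)} Σ_{ω1 ∈ Ω1} ξ1(ω1)·p1(ω1)·C_{y·ξ1(ω1)}(Z(ω1,·); p2(·|ω1)), where a summand with ξ1(ω1) = 0 is interpreted as 0. -/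
import Mathlib


noncomputable section

/-- The CVaR risk envelope `U(y, q)`. -/
def riskEnv {Ω : Type*} [Fintype Ω] (y : ℝ) (q : Ω → ℝ) : Set (Ω → ℝ) :=
  {ξ | (∀ ω, 0 ≤ ξ ω ∧ ξ ω ≤ 1 / y) ∧ ∑ ω, ξ ω * q ω = 1}

/-- The dual form of CVaR: `C_y(Z; q) = sup_{ξ ∈ U(y,q)} Σ_ω ξ(ω) q(ω) Z(ω)`.
(When `y = 0` the envelope is empty and `sSup ∅ = 0`, matching the convention
that a summand with `ξ1(ω1) = 0` is interpreted as `0`.) -/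
def cvarD {Ω : Type*} [Fintype Ω] (y : ℝ) (q Z : Ω → ℝ) : ℝ :=
  sSup ((fun ξ : Ω → ℝ => ∑ ω, ξ ω * q ω * Z ω) '' riskEnv y q)

lemma env_sum_le {Ω : Type*} [Fintype Ω] {y : ℝ} {q Z ξ : Ω → ℝ}
    (hq : ∀ ω, 0 ≤ q ω) (hξ : ξ ∈ riskEnv y q) :
    ∑ ω, ξ ω * q ω * Z ω ≤ ∑ ω, max (1/y) 0 * (q ω * |Z ω|) := by
  apply Finset.sum_le_sum
  intro ω _
  have h0 := (hξ.1 ω).1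
  have h1 := (hξ.1 ω).2
  have hqZ : q ω * Z ω ≤ q ω * |Z ω| := mul_le_mul_of_nonneg_left (le_abs_self _) (hq ω)
  calc ξ ω * q ω * Z ω = ξ ω * (q ω * Z ω) := by ring
    _ ≤ ξ ω * (q ω * |Z ω|) := mul_le_mul_of_nonneg_left hqZ h0
    _ ≤ max (1/y) 0 * (q ω * |Z ω|) :=
        mul_le_mul_of_nonneg_right (le_trans h1 (le_max_left _ _))
          (mul_nonneg (hq ω) (abs_nonneg _))

lemma riskEnv_bddAbove {Ω : Type*} [Fintype Ω] (y : ℝ) (q Z : Ω → ℝ) (hq : ∀ ω, 0 ≤ q ω) :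
    BddAbove ((fun ξ : Ω → ℝ => ∑ ω, ξ ω * q ω * Z ω) '' riskEnv y q) := by
  refine ⟨∑ ω, max (1/y) 0 * (q ω * |Z ω|), ?_⟩
  rintro x ⟨ξ, hξ, rfl⟩
  exact env_sum_le hq hξ

lemma cvarD_le_bound {Ω : Type*} [Fintype Ω] (y : ℝ) (q Z : Ω → ℝ) (hq : ∀ ω, 0 ≤ q ω) :
    cvarD y q Z ≤ ∑ ω, max (1/y) 0 * (q ω * |Z ω|) := by
  apply Real.sSup_le
  · rintro x ⟨ξ, hξ, rfl⟩
    exact env_sum_le hq hξ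
  · apply Finset.sum_nonneg
    intro ω _
    exact mul_nonneg (le_max_right _ _) (mul_nonneg (hq ω) (abs_nonneg _))

lemma one_mem_riskEnv {Ω : Type*} [Fintype Ω] {y : ℝ} {q : Ω → ℝ} (hy0 : 0 < y) (hy1 : y ≤ 1)
    (hq : ∑ ω, q ω = 1) : (fun _ => (1:ℝ)) ∈ riskEnv y q := by
  constructor
  · intro ω
    refine ⟨zero_le_one, ?_⟩
    rw [le_div_iff₀ hy0]
    simpa using hy1
  · simpa using hq

/-- CVaR decomposition for finite two-stage models (Proposition 2, finite form). -/
theorem cvar_decomposition {Ω1 Ω2 : Type*} [Fintype Ω1] [Fintype Ω2]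
    [Nonempty Ω1] [Nonempty Ω2]
    (p1 : Ω1 → ℝ) (hp1 : (∀ ω1, 0 ≤ p1 ω1) ∧ ∑ ω1, p1 ω1 = 1)
    (p2 : Ω1 → Ω2 → ℝ) (hp2 : ∀ ω1, (∀ ω2, 0 ≤ p2 ω1 ω2) ∧ ∑ ω2, p2 ω1 ω2 = 1)
    (Z : Ω1 × Ω2 → ℝ) (y : ℝ) (hy : y ∈ Set.Ioc (0:ℝ) 1) :
    cvarD y (fun ω : Ω1 × Ω2 => p1 ω.1 * p2 ω.1 ω.2) Z
      = sSup ((fun ξ1 : Ω1 → ℝ =>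
          ∑ ω1, ξ1 ω1 * p1 ω1 * cvarD (y * ξ1 ω1) (p2 ω1) (fun ω2 => Z (ω1, ω2)))
            '' riskEnv y p1) := by
  obtain ⟨hy0, hy1⟩ := hy
  set p : Ω1 × Ω2 → ℝ := fun ω => p1 ω.1 * p2 ω.1 ω.2 with hpdef
  have hpnn : ∀ ω, 0 ≤ p ω := fun ω => mul_nonneg (hp1.1 ω.1) ((hp2 ω.1).1 ω.2)
  have hpsum : ∑ ω, p ω = 1 := by
    rw [hpdef, Fintype.sum_prod_type]
    calc ∑ ω1, ∑ ω2, p1 ω1 * p2 ω1 ω2 = ∑ ω1, p1 ω1 * ∑ ω2, p2 ω1 ω2 := by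
          simp [Finset.mul_sum]
      _ = 1 := by simp only [(hp2 _).2]; simpa using hp1.2
  -- nonemptiness of both image sets
  have hLne : ((fun ξ : Ω1 × Ω2 → ℝ => ∑ ω, ξ ω * p ω * Z ω) '' riskEnv y p).Nonempty :=
    ⟨_, Set.mem_image_of_mem _ (one_mem_riskEnv hy0 hy1 hpsum)⟩
  have hRne : ((fun ξ1 : Ω1 → ℝ =>
      ∑ ω1, ξ1 ω1 * p1 ω1 * cvarD (y * ξ1 ω1) (p2 ω1) (fun ω2 => Z (ω1, ω2)))
        '' riskEnv y p1).Nonempty :=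
    ⟨_, Set.mem_image_of_mem _ (one_mem_riskEnv hy0 hy1 hp1.2)⟩
  have hLbdd := riskEnv_bddAbove y p Z hpnn
  -- Bounded above for the RHS set
  have hRbdd : BddAbove ((fun ξ1 : Ω1 → ℝ =>
      ∑ ω1, ξ1 ω1 * p1 ω1 * cvarD (y * ξ1 ω1) (p2 ω1) (fun ω2 => Z (ω1, ω2)))
        '' riskEnv y p1) := by
    refine ⟨∑ ω1, 1/y * p1 ω1 * ∑ ω2, p2 ω1 ω2 * |Z (ω1, ω2)|, ?_⟩
    rintro x ⟨ξ1, hξ1, rfl⟩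
    apply Finset.sum_le_sum
    intro ω1 _
    have hnn := (hξ1.1 ω1).1
    have hub := (hξ1.1 ω1).2
    have hSnn : 0 ≤ ∑ ω2, p2 ω1 ω2 * |Z (ω1, ω2)| :=
      Finset.sum_nonneg fun ω2 _ => mul_nonneg ((hp2 ω1).1 ω2) (abs_nonneg _)
    rcases eq_or_lt_of_le hnn with h0 | h0
    · rw [← h0]
      have : (0:ℝ) ≤ 1/y * p1 ω1 * ∑ ω2, p2 ω1 ω2 * |Z (ω1, ω2)| :=
        mul_nonneg (mul_nonneg (by positivity) (hp1.1 ω1)) hSnn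
      simpa using this
    · have hyx : 0 < y * ξ1 ω1 := mul_pos hy0 h0
      have hcb : cvarD (y * ξ1 ω1) (p2 ω1) (fun ω2 => Z (ω1, ω2))
          ≤ 1/(y * ξ1 ω1) * ∑ ω2, p2 ω1 ω2 * |Z (ω1, ω2)| := by
        have := cvarD_le_bound (y * ξ1 ω1) (p2 ω1) (fun ω2 => Z (ω1, ω2)) (hp2 ω1).1
        rwa [max_eq_left (by positivity), ← Finset.mul_sum] at this
      calc ξ1 ω1 * p1 ω1 * cvarD (y * ξ1 ω1) (p2 ω1) (fun ω2 => Z (ω1, ω2))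
          ≤ ξ1 ω1 * p1 ω1 * (1/(y * ξ1 ω1) * ∑ ω2, p2 ω1 ω2 * |Z (ω1, ω2)|) :=
            mul_le_mul_of_nonneg_left hcb (mul_nonneg hnn (hp1.1 ω1))
        _ = 1/y * p1 ω1 * ∑ ω2, p2 ω1 ω2 * |Z (ω1, ω2)| := by
            field_simp
  apply le_antisymm
  · -- LHS ≤ RHS
    apply csSup_le hLne
    rintro x ⟨ξ, hξ, rfl⟩
    set ξ1 : Ω1 → ℝ := fun ω1 => ∑ ω2, ξ (ω1, ω2) * p2 ω1 ω2 with hξ1def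
    have hξ1nn : ∀ ω1, 0 ≤ ξ1 ω1 := fun ω1 =>
      Finset.sum_nonneg fun ω2 _ => mul_nonneg (hξ.1 (ω1, ω2)).1 ((hp2 ω1).1 ω2)
    have hξ1mem : ξ1 ∈ riskEnv y p1 := by
      constructor
      · intro ω1
        refine ⟨hξ1nn ω1, ?_⟩
        calc ξ1 ω1 ≤ ∑ ω2, 1/y * p2 ω1 ω2 :=
              Finset.sum_le_sum fun ω2 _ =>
                mul_le_mul_of_nonneg_right (hξ.1 (ω1, ω2)).2 ((hp2 ω1).1 ω2)
          _ = 1/y := by rw [← Finset.mul_sum, (hp2 ω1).2, mul_one]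
      · have : ∑ ω1, ξ1 ω1 * p1 ω1 = ∑ ω : Ω1 × Ω2, ξ ω * p ω := by
          rw [Fintype.sum_prod_type]
          refine Finset.sum_congr rfl fun ω1 _ => ?_
          rw [hξ1def, Finset.sum_mul]
          exact Finset.sum_congr rfl fun ω2 _ => by simp only [hpdef]; ring
        rw [this]; exact hξ.2
    refine le_trans ?_ (le_csSup hRbdd ⟨ξ1, hξ1mem, rfl⟩)
    dsimp only
    rw [Fintype.sum_prod_type]
    apply Finset.sum_le_sum
    intro ω1 _
    rcases eq_or_lt_of_le (hξ1nn ω1) with h0 | h0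
    · -- ξ1 ω1 = 0 case: every ξ (ω1, ω2) * p2 ω1 ω2 = 0
      have hterm : ∀ ω2 ∈ Finset.univ, ξ (ω1, ω2) * p2 ω1 ω2 = 0 := by
        intro ω2 _
        refine (Finset.sum_eq_zero_iff_of_nonneg fun ω2 _ =>
          mul_nonneg (hξ.1 (ω1, ω2)).1 ((hp2 ω1).1 ω2)).mp h0.symm ω2 (Finset.mem_univ _)
      have hL : ∑ ω2, ξ (ω1, ω2) * p (ω1, ω2) * Z (ω1, ω2) = 0 := by
        apply Finset.sum_eq_zero
        intro ω2 _
        have := hterm ω2 (Finset.mem_univ _)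
        simp only [hpdef]
        calc ξ (ω1, ω2) * (p1 ω1 * p2 ω1 ω2) * Z (ω1, ω2)
            = ξ (ω1, ω2) * p2 ω1 ω2 * (p1 ω1 * Z (ω1, ω2)) := by ring
          _ = 0 := by rw [this, zero_mul]
      rw [hL, ← h0]
      simp
    · -- ξ1 ω1 > 0 case
      set ξ2 : Ω2 → ℝ := fun ω2 => ξ (ω1, ω2) / ξ1 ω1 with hξ2def
      have hξ2mem : ξ2 ∈ riskEnv (y * ξ1 ω1) (p2 ω1) := by
        constructor
        · intro ω2
          refine ⟨div_nonneg (hξ.1 (ω1, ω2)).1 h0.le, ?_⟩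
          rw [hξ2def, div_le_iff₀ h0]
          have heq : 1 / (y * ξ1 ω1) * ξ1 ω1 = 1 / y := by field_simp
          rw [heq]
          exact (hξ.1 (ω1, ω2)).2
        · rw [hξ2def]
          simp only [div_mul_eq_mul_div, ← Finset.sum_div]
          exact div_self h0.ne'
      have hle : ∑ ω2, ξ2 ω2 * p2 ω1 ω2 * Z (ω1, ω2)
          ≤ cvarD (y * ξ1 ω1) (p2 ω1) (fun ω2 => Z (ω1, ω2)) :=
        le_csSup (riskEnv_bddAbove _ _ _ (hp2 ω1).1) ⟨ξ2, hξ2mem, rfl⟩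
      have hrw : ∑ ω2, ξ (ω1, ω2) * p (ω1, ω2) * Z (ω1, ω2)
          = ξ1 ω1 * p1 ω1 * ∑ ω2, ξ2 ω2 * p2 ω1 ω2 * Z (ω1, ω2) := by
        rw [Finset.mul_sum]
        refine Finset.sum_congr rfl fun ω2 _ => ?_
        simp only [hpdef, hξ2def]
        field_simp
      rw [hrw]
      exact mul_le_mul_of_nonneg_left hle (mul_nonneg h0.le (hp1.1 ω1))
  · -- RHS ≤ LHS
    apply csSup_le hRne
    rintro x ⟨ξ1, hξ1, rfl⟩
    apply le_of_forall_pos_le_add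
    intro ε hε
    -- choose near-optimal ξ2 for each ω1
    have key : ∀ ω1, ∃ ξ2 : Ω2 → ℝ,
        (∀ ω2, 0 ≤ ξ2 ω2 ∧ ξ1 ω1 * ξ2 ω2 ≤ 1 / y) ∧
        (∑ ω2, ξ2 ω2 * p2 ω1 ω2) * ξ1 ω1 = ξ1 ω1 ∧
        ξ1 ω1 * p1 ω1 * cvarD (y * ξ1 ω1) (p2 ω1) (fun ω2 => Z (ω1, ω2)) ≤
          ξ1 ω1 * p1 ω1 * (∑ ω2, ξ2 ω2 * p2 ω1 ω2 * Z (ω1, ω2)) + ξ1 ω1 * p1 ω1 * ε := by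
      intro ω1
      rcases eq_or_lt_of_le (hξ1.1 ω1).1 with h0 | h0
      · refine ⟨fun _ => 0, fun ω2 => ⟨le_refl _, ?_⟩, by simp [← h0], by rw [← h0]; simp⟩
        rw [← h0, zero_mul]
        positivity
      · have hyx : 0 < y * ξ1 ω1 := mul_pos hy0 h0
        have hyx1 : y * ξ1 ω1 ≤ 1 := by
          have := (hξ1.1 ω1).2
          calc y * ξ1 ω1 ≤ y * (1 / y) := mul_le_mul_of_nonneg_left this hy0.le
            _ = 1 := by field_simp
        have hne : ((fun ξ2 : Ω2 → ℝ => ∑ ω2, ξ2 ω2 * p2 ω1 ω2 * Z (ω1, ω2)) ''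
            riskEnv (y * ξ1 ω1) (p2 ω1)).Nonempty :=
          ⟨_, Set.mem_image_of_mem _ (one_mem_riskEnv hyx hyx1 (hp2 ω1).2)⟩
        obtain ⟨x, ⟨ξ2, hξ2mem, rfl⟩, hx⟩ := exists_lt_of_lt_csSup hne
          (sub_lt_self (cvarD (y * ξ1 ω1) (p2 ω1) (fun ω2 => Z (ω1, ω2))) hε)
        refine ⟨ξ2, fun ω2 => ⟨(hξ2mem.1 ω2).1, ?_⟩, by rw [hξ2mem.2, one_mul], ?_⟩
        · have := (hξ2mem.1 ω2).2
          calc ξ1 ω1 * ξ2 ω2 ≤ ξ1 ω1 * (1 / (y * ξ1 ω1)) :=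
                mul_le_mul_of_nonneg_left this h0.le
            _ = 1 / y := by field_simp
        · have h1 : cvarD (y * ξ1 ω1) (p2 ω1) (fun ω2 => Z (ω1, ω2)) ≤
              (∑ ω2, ξ2 ω2 * p2 ω1 ω2 * Z (ω1, ω2)) + ε := by linarith
          calc ξ1 ω1 * p1 ω1 * cvarD (y * ξ1 ω1) (p2 ω1) (fun ω2 => Z (ω1, ω2))
              ≤ ξ1 ω1 * p1 ω1 * ((∑ ω2, ξ2 ω2 * p2 ω1 ω2 * Z (ω1, ω2)) + ε) :=
                mul_le_mul_of_nonneg_left h1 (mul_nonneg h0.le (hp1.1 ω1))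
            _ = ξ1 ω1 * p1 ω1 * (∑ ω2, ξ2 ω2 * p2 ω1 ω2 * Z (ω1, ω2)) +
                ξ1 ω1 * p1 ω1 * ε := by ring
    choose ξ2 hbd hsum hle using key
    set ξ : Ω1 × Ω2 → ℝ := fun ω => ξ1 ω.1 * ξ2 ω.1 ω.2 with hξdef
    have hξmem : ξ ∈ riskEnv y p := by
      constructor
      · intro ω
        exact ⟨mul_nonneg (hξ1.1 ω.1).1 (hbd ω.1 ω.2).1, (hbd ω.1 ω.2).2⟩
      · rw [hξdef]
        have : ∑ ω : Ω1 × Ω2, ξ1 ω.1 * ξ2 ω.1 ω.2 * p ω = ∑ ω1, ξ1 ω1 * p1 ω1 := by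
          rw [Fintype.sum_prod_type]
          refine Finset.sum_congr rfl fun ω1 _ => ?_
          have : ∑ ω2, ξ1 ω1 * ξ2 ω1 ω2 * p (ω1, ω2)
              = ((∑ ω2, ξ2 ω1 ω2 * p2 ω1 ω2) * ξ1 ω1) * p1 ω1 := by
            rw [Finset.sum_mul, Finset.sum_mul]
            refine Finset.sum_congr rfl fun ω2 _ => ?_
            simp only [hpdef]
            ring
          rw [this, hsum ω1]
        rw [this]
        exact hξ1.2
    have hval : ∑ ω : Ω1 × Ω2, ξ ω * p ω * Z ω
        = ∑ ω1, ξ1 ω1 * p1 ω1 * (∑ ω2, ξ2 ω1 ω2 * p2 ω1 ω2 * Z (ω1, ω2)) := by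
      rw [Fintype.sum_prod_type]
      refine Finset.sum_congr rfl fun ω1 _ => ?_
      rw [Finset.mul_sum]
      refine Finset.sum_congr rfl fun ω2 _ => ?_
      simp only [hξdef, hpdef]
      ring
    have hmem : ∑ ω : Ω1 × Ω2, ξ ω * p ω * Z ω ≤
        sSup ((fun ξ : Ω1 × Ω2 → ℝ => ∑ ω, ξ ω * p ω * Z ω) '' riskEnv y p) :=
      le_csSup hLbdd ⟨ξ, hξmem, rfl⟩
    calc ∑ ω1, ξ1 ω1 * p1 ω1 * cvarD (y * ξ1 ω1) (p2 ω1) (fun ω2 => Z (ω1, ω2))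
        ≤ ∑ ω1, (ξ1 ω1 * p1 ω1 * (∑ ω2, ξ2 ω1 ω2 * p2 ω1 ω2 * Z (ω1, ω2)) +
            ξ1 ω1 * p1 ω1 * ε) := Finset.sum_le_sum fun ω1 _ => hle ω1
      _ = (∑ ω : Ω1 × Ω2, ξ ω * p ω * Z ω) + (∑ ω1, ξ1 ω1 * p1 ω1) * ε := by
          rw [Finset.sum_add_distrib, hval, Finset.sum_mul]
      _ = (∑ ω : Ω1 × Ω2, ξ ω * p ω * Z ω) + ε := by rw [hξ1.2, one_mul]
      _ ≤ sSup ((fun ξ : Ω1 × Ω2 → ℝ => ∑ ω, ξ ω * p ω * Z ω) '' riskEnv y p) + ε := by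
          linarith
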